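/- arXiv:2312.09829 — 4 statements merged into one kernel-verified Lean document; each statement's English description precedes it below -/
import Mathlib

section
/- Let r ∈ ℕ. The four splines g⁽¹⁾ = (1,1,1,1), g⁽²⁾ = (0, y^{r+1}, y^{r+1}, 0), g⁽³⁾ = (0, 0, x^{r+1}, x^{r+1}), g⁽⁴⁾ = (0, 0, 0, x^{r+1}y^{r+1}) form a free basis of S^r(G) as an ℝ[x,y]-module: a quadruple f of polynomials lies in S^r(G) if and only if there exist unique h₁, h₂, h₃, h₄ ∈ ℝ[x,y] with f = h₁g⁽¹⁾ + h₂g⁽²⁾ + h₃g⁽³⁾ + h₄g⁽⁴⁾. -/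
open MvPolynomial

private lemma primeX (n : Fin 2) : Prime (X n : MvPolynomial (Fin 2) ℝ) := by
  have h0 : Prime (X 0 : MvPolynomial (Fin 2) ℝ) := by
    rw [← MulEquiv.prime_iff (finSuccEquiv ℝ 1).toMulEquiv]
    have : (finSuccEquiv ℝ 1).toMulEquiv (X 0) = Polynomial.X := by
      simp [finSuccEquiv_X_zero]
    rw [this]
    exact Polynomial.prime_X
  fin_cases n
  · exact h0
  · show Prime (X 1 : MvPolynomial (Fin 2) ℝ)
    rw [← MulEquiv.prime_iff (renameEquiv ℝ (Equiv.swap (0:Fin 2) 1)).toMulEquiv]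
    have : (renameEquiv ℝ (Equiv.swap (0:Fin 2) 1)).toMulEquiv (X 1) = X 0 := by
      simp
    rw [this]
    exact h0

private lemma notdvd (r : ℕ) : ¬ (X 1 : MvPolynomial (Fin 2) ℝ) ∣ (X 0) ^ (r+1) := by
  intro h
  have h2 : (X 1 : MvPolynomial (Fin 2) ℝ) ∣ X 0 := (primeX 1).dvd_of_dvd_pow h
  have := map_dvd (eval (fun i : Fin 2 => if i = 0 then (1:ℝ) else 0)) h2
  simp at this

/-- Let `G` be the 4-cycle with edge labels `y, x, y, x` (in `ℝ[x,y]`, with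
`x = X 0`, `y = X 1`). A quadruple `f = (f₁,f₂,f₃,f₄)` of polynomials lies in
`S^r(G)` if and only if it is a unique `ℝ[x,y]`-linear combination of
`g⁽¹⁾ = (1,1,1,1)`, `g⁽²⁾ = (0, y^{r+1}, y^{r+1}, 0)`,
`g⁽³⁾ = (0, 0, x^{r+1}, x^{r+1})`, `g⁽⁴⁾ = (0, 0, 0, x^{r+1} y^{r+1})`;
i.e. these four splines form a free basis of `S^r(G)` over `ℝ[x,y]`. -/
theorem free_basis_of_splines_on_four_cycle (r : ℕ)
    (f : Fin 4 → MvPolynomial (Fin 2) ℝ) :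
    let x : MvPolynomial (Fin 2) ℝ := X 0
    let y : MvPolynomial (Fin 2) ℝ := X 1
    let g1 : Fin 4 → MvPolynomial (Fin 2) ℝ := ![1, 1, 1, 1]
    let g2 : Fin 4 → MvPolynomial (Fin 2) ℝ := ![0, y ^ (r + 1), y ^ (r + 1), 0]
    let g3 : Fin 4 → MvPolynomial (Fin 2) ℝ := ![0, 0, x ^ (r + 1), x ^ (r + 1)]
    let g4 : Fin 4 → MvPolynomial (Fin 2) ℝ := ![0, 0, 0, x ^ (r + 1) * y ^ (r + 1)]
    (y ^ (r + 1) ∣ f 0 - f 1 ∧ x ^ (r + 1) ∣ f 1 - f 2 ∧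
     y ^ (r + 1) ∣ f 2 - f 3 ∧ x ^ (r + 1) ∣ f 3 - f 0) ↔
    ∃! h : MvPolynomial (Fin 2) ℝ × MvPolynomial (Fin 2) ℝ ×
           MvPolynomial (Fin 2) ℝ × MvPolynomial (Fin 2) ℝ,
      f = h.1 • g1 + h.2.1 • g2 + h.2.2.1 • g3 + h.2.2.2 • g4 := by
  intro x y g1 g2 g3 g4
  have hxne : (x : MvPolynomial (Fin 2) ℝ) ^ (r+1) ≠ 0 := pow_ne_zero _ (X_ne_zero _)
  have hyne : (y : MvPolynomial (Fin 2) ℝ) ^ (r+1) ≠ 0 := pow_ne_zero _ (X_ne_zero _)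
  constructor
  · rintro ⟨⟨a, ha⟩, ⟨b, hb⟩, ⟨c, hc⟩, ⟨d, hd⟩⟩
    have key : y ^ (r+1) ∣ b + d := by
      apply (primeX 1).pow_dvd_of_dvd_mul_left (r+1) (notdvd r)
      exact ⟨-(a + c), by linear_combination -ha - hb - hc - hd⟩
    obtain ⟨e, he⟩ := key
    refine ⟨(f 0, -a, -b, e), ?_, ?_⟩
    · funext i
      fin_cases i <;>
        simp [g1, g2, g3, g4, Pi.add_apply, Pi.smul_apply, smul_eq_mul]
      · linear_combination -ha
      · linear_combination -ha - hb
      · linear_combination hd + x^(r+1) * he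
    · rintro ⟨h1, h2, h3, h4⟩ hh
      have e0 := congrFun hh 0
      have e1 := congrFun hh 1
      have e2 := congrFun hh 2
      have e3 := congrFun hh 3
      simp only [g1, g2, g3, g4, Pi.add_apply, Pi.smul_apply, smul_eq_mul,
        Matrix.cons_val_zero, Matrix.cons_val_one, Matrix.head_cons,
        Matrix.cons_val_two, Matrix.tail_cons, Matrix.cons_val_three,
        mul_one, mul_zero, add_zero, zero_add] at e0 e1 e2 e3
      have k1 : h1 = f 0 := e0.symm
      have k2 : h2 = -a := by
        have : h2 * y ^ (r+1) = -a * y ^ (r+1) := by linear_combination e0 - e1 - ha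
        exact mul_right_cancel₀ hyne this
      have k3 : h3 = -b := by
        have : h3 * x ^ (r+1) = -b * x ^ (r+1) := by
          linear_combination e1 - e2 - hb
        exact mul_right_cancel₀ hxne this
      have k4 : h4 = e := by
        have : h4 * (x ^ (r+1) * y ^ (r+1)) = e * (x ^ (r+1) * y ^ (r+1)) := by
          linear_combination e0 - e3 + hd + x^(r+1)*he - x^(r+1)*k3
        exact mul_right_cancel₀ (mul_ne_zero hxne hyne) this
      simp [k1, k2, k3, k4]
  · rintro ⟨⟨h1, h2, h3, h4⟩, hf, -⟩
    have e0 := congrFun hf 0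
    have e1 := congrFun hf 1
    have e2 := congrFun hf 2
    have e3 := congrFun hf 3
    simp only [g1, g2, g3, g4, Pi.add_apply, Pi.smul_apply, smul_eq_mul,
      Matrix.cons_val_zero, Matrix.cons_val_one, Matrix.head_cons,
      Matrix.cons_val_two, Matrix.tail_cons, Matrix.cons_val_three,
      mul_one, mul_zero, add_zero, zero_add] at e0 e1 e2 e3
    exact ⟨⟨-h2, by linear_combination e0 - e1⟩,
           ⟨-h3, by linear_combination e1 - e2⟩,
           ⟨h2 - h4 * x ^ (r+1), by linear_combination e2 - e3⟩,
           ⟨h3 + h4 * y ^ (r+1), by linear_combination e3 - e0⟩⟩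
end

section
/- For all r, d ∈ ℕ, the real dimension of S^r_d(G) equals: C(d+2, 2) if d < r+1; C(d+2, 2) + 2·C(d−r+1, 2) if r+1 ≤ d < 2(r+1); and C(d+2, 2) + 2·C(d−r+1, 2) + C(d−2r, 2) if d ≥ 2(r+1), where C(m, 2) denotes the binomial coefficient m choose 2. -/
open MvPolynomial

/-- The degree-bounded spline space `S^r_d(G)` for the 4-cycle with edge labels
`ℓ(v₁v₂) = l12`, `ℓ(v₂v₃) = l23`, `ℓ(v₃v₄) = l34`, `ℓ(v₄v₁) = l41`, as an
`ℝ`-subspace of quadruples of polynomials in `ℝ[x,y]`. -/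
noncomputable def splineSubmodule (l12 l23 l34 l41 : MvPolynomial (Fin 2) ℝ)
    (r d : ℕ) : Submodule ℝ (Fin 4 → MvPolynomial (Fin 2) ℝ) where
  carrier := {f | l12 ^ (r + 1) ∣ f 0 - f 1 ∧ l23 ^ (r + 1) ∣ f 1 - f 2 ∧
    l34 ^ (r + 1) ∣ f 2 - f 3 ∧ l41 ^ (r + 1) ∣ f 3 - f 0 ∧
    ∀ i, (f i).totalDegree ≤ d}
  add_mem' := by
    rintro a b ⟨ha1, ha2, ha3, ha4, ha5⟩ ⟨hb1, hb2, hb3, hb4, hb5⟩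
    refine ⟨?_, ?_, ?_, ?_, ?_⟩
    · simpa [Pi.add_apply, add_sub_add_comm] using dvd_add ha1 hb1
    · simpa [Pi.add_apply, add_sub_add_comm] using dvd_add ha2 hb2
    · simpa [Pi.add_apply, add_sub_add_comm] using dvd_add ha3 hb3
    · simpa [Pi.add_apply, add_sub_add_comm] using dvd_add ha4 hb4
    · intro i
      exact le_trans (totalDegree_add _ _) (max_le (ha5 i) (hb5 i))
  zero_mem' := by
    refine ⟨⟨0, by simp⟩, ⟨0, by simp⟩, ⟨0, by simp⟩, ⟨0, by simp⟩, ?_⟩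
    intro i
    simp
  smul_mem' := by
    rintro c a ⟨ha1, ha2, ha3, ha4, ha5⟩
    refine ⟨?_, ?_, ?_, ?_, ?_⟩
    · simpa [Pi.smul_apply, smul_eq_C_mul, ← mul_sub] using (ha1.mul_left (C c))
    · simpa [Pi.smul_apply, smul_eq_C_mul, ← mul_sub] using (ha2.mul_left (C c))
    · simpa [Pi.smul_apply, smul_eq_C_mul, ← mul_sub] using (ha3.mul_left (C c))
    · simpa [Pi.smul_apply, smul_eq_C_mul, ← mul_sub] using (ha4.mul_left (C c))
    · intro i
      calc ((c • a) i).totalDegree = (c • (a i)).totalDegree := rfl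
        _ ≤ (a i).totalDegree := totalDegree_smul_le c (a i)
        _ ≤ d := ha5 i


lemma card_count (m : ℕ) :
    ((Finset.range (m+1)).sigma fun a => Finset.range (m+1-a)).card = (m+2).choose 2 := by
  rw [Finset.card_sigma]
  simp only [Finset.card_range]
  have h := Finset.sum_range_reflect (fun a => m+1-a) (m+1)
  have h2 : ∑ j ∈ Finset.range (m+1), (m+1-(m+1-1-j)) = ∑ j ∈ Finset.range (m+1), (j+1) := by
    refine Finset.sum_congr rfl fun j hj => ?_
    have := Finset.mem_range.mp hj; omega
  have h3 : ∑ j ∈ Finset.range (m+1), (j+1) = ∑ i ∈ Finset.range (m+2), i := by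
    rw [Finset.sum_range_succ' (fun i => i) (m+1)]; simp
  rw [← h, h2, h3, Finset.sum_range_id, Nat.choose_two_right]

noncomputable def degSetEquiv (m : ℕ) :
    {n : Fin 2 →₀ ℕ | (n.sum fun _ e => e) ≤ m} ≃
    {x : Σ _ : ℕ, ℕ // x ∈ (Finset.range (m+1)).sigma fun a => Finset.range (m+1-a)} := by
  refine Equiv.trans (Equiv.subtypeEquiv (Finsupp.equivFunOnFinite.trans (finTwoArrowEquiv ℕ))
    (q := fun p => p.1 + p.2 ≤ m) ?_) ?_
  · intro n
    have : (n.sum fun _ e => e) = n 0 + n 1 := by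
      rw [Finsupp.sum_fintype _ _ (fun _ => rfl), Fin.sum_univ_two]
    simp [this, finTwoArrowEquiv]
  · refine Equiv.subtypeEquiv (Equiv.sigmaEquivProd ℕ ℕ).symm ?_
    intro p
    simp [Finset.mem_sigma, Finset.mem_range, Equiv.sigmaEquivProd]
    omega

lemma finrank_rtd (m : ℕ) :
    Module.finrank ℝ (restrictTotalDegree (Fin 2) ℝ m) = (m+2).choose 2 := by
  classical
  haveI : Fintype {n : Fin 2 →₀ ℕ | (n.sum fun _ e => e) ≤ m} :=
    Fintype.ofEquiv _ (degSetEquiv m).symm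
  have hb := Module.finrank_eq_card_basis
    (basisRestrictSupport ℝ {n : Fin 2 →₀ ℕ | (n.sum fun _ e => e) ≤ m})
  rw [show restrictTotalDegree (Fin 2) ℝ m
      = restrictSupport ℝ {n : Fin 2 →₀ ℕ | (n.sum fun _ e => e) ≤ m} from rfl, hb,
    Fintype.card_congr (degSetEquiv m), Fintype.card_coe, card_count]

lemma prime_X0 : Prime (X 0 : MvPolynomial (Fin 2) ℝ) := by
  rw [← MulEquiv.prime_iff (finSuccEquiv ℝ 1).toMulEquiv]
  have h : ((finSuccEquiv ℝ 1).toMulEquiv (X 0)) = Polynomial.X :=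
    finSuccEquiv_X_zero (R := ℝ) (n := 1)
  rw [h]; exact Polynomial.prime_X

lemma prime_X1 : Prime (X 1 : MvPolynomial (Fin 2) ℝ) := by
  rw [← MulEquiv.prime_iff (finSuccEquiv ℝ 1).toMulEquiv]
  have h : ((finSuccEquiv ℝ 1).toMulEquiv (X 1)) = Polynomial.C (X 0) := by
    have := finSuccEquiv_X_succ (R := ℝ) (n := 1) (j := 0)
    rwa [show (0 : Fin 1).succ = 1 from rfl] at this
  rw [h, Polynomial.prime_C_iff]
  rw [← MulEquiv.prime_iff (finSuccEquiv ℝ 0).toMulEquiv]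
  have h2 : ((finSuccEquiv ℝ 0).toMulEquiv (X 0)) = Polynomial.X :=
    finSuccEquiv_X_zero (R := ℝ) (n := 0)
  rw [h2]; exact Polynomial.prime_X

lemma not_X1_dvd_X0 : ¬ (X 1 : MvPolynomial (Fin 2) ℝ) ∣ (X 0 : MvPolynomial (Fin 2) ℝ) := by
  rintro ⟨q, hq⟩
  have := congrArg (eval (fun i : Fin 2 => if i = 0 then (1:ℝ) else 0)) hq
  simp at this

section degree
variable {σ : Type*} {R : Type*} [CommSemiring R] [NoZeroDivisors R] [Nontrivial R]

omit [NoZeroDivisors R] [Nontrivial R] in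
lemma tdeg_X_mul (s : σ) (p : MvPolynomial σ R) (hp : p ≠ 0) :
    (X s * p).totalDegree = p.totalDegree + 1 := by
  classical
  rw [totalDegree, totalDegree, support_X_mul, Finset.sup_map]
  have hns : p.support.Nonempty := support_nonempty.mpr hp
  have hc : ((fun m : σ →₀ ℕ => m.sum fun _ e => e) ∘ ⇑(addLeftEmbedding (Finsupp.single s 1)))
      = Nat.succ ∘ (fun m : σ →₀ ℕ => m.sum fun _ e => e) := by
    funext m
    simp only [Function.comp_apply, addLeftEmbedding_apply]
    rw [Finsupp.sum_add_index' (fun _ => rfl) (fun _ _ _ => rfl),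
      Finsupp.sum_single_index rfl]
    omega
  rw [hc, ← Finset.comp_sup_eq_sup_comp_of_nonempty (g := Nat.succ)
    (fun {x y} h => Nat.succ_le_succ h) hns]

lemma tdeg_X_pow_mul (s : σ) (k : ℕ) (p : MvPolynomial σ R) (hp : p ≠ 0) :
    ((X s) ^ k * p).totalDegree = k + p.totalDegree := by
  induction k with
  | zero => simp
  | succ n ih =>
      rw [pow_succ', mul_assoc, tdeg_X_mul s _ (mul_ne_zero (pow_ne_zero _ (X_ne_zero s)) hp), ih]
      omega

lemma tdeg_sub_le (p q : MvPolynomial σ ℝ) :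
    (p - q).totalDegree ≤ max p.totalDegree q.totalDegree := by
  rw [sub_eq_add_neg]
  exact (totalDegree_add p (-q)).trans (by rw [totalDegree_neg])

end degree

noncomputable def Qsub (g : MvPolynomial (Fin 2) ℝ) (d : ℕ) :
    Submodule ℝ (MvPolynomial (Fin 2) ℝ) :=
  (restrictTotalDegree (Fin 2) ℝ d).comap (LinearMap.mulLeft ℝ g)

lemma mem_Qsub {g p : MvPolynomial (Fin 2) ℝ} {d : ℕ} :
    p ∈ Qsub g d ↔ (g * p).totalDegree ≤ d := by
  simp [Qsub, Submodule.mem_comap, LinearMap.mulLeft_apply, mem_restrictTotalDegree]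

lemma Qsub_eq {g : MvPolynomial (Fin 2) ℝ} {k d : ℕ}
    (hg : ∀ p : MvPolynomial (Fin 2) ℝ, p ≠ 0 → (g * p).totalDegree = k + p.totalDegree)
    (hkd : k ≤ d) : Qsub g d = restrictTotalDegree (Fin 2) ℝ (d - k) := by
  ext p
  rw [mem_Qsub, mem_restrictTotalDegree]
  by_cases hp : p = 0
  · simp [hp]
  · rw [hg p hp]; omega

lemma Qsub_eq_bot {g : MvPolynomial (Fin 2) ℝ} {k d : ℕ}
    (hg : ∀ p : MvPolynomial (Fin 2) ℝ, p ≠ 0 → (g * p).totalDegree = k + p.totalDegree)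
    (hdk : d < k) : Qsub g d = ⊥ := by
  ext p
  rw [mem_Qsub, Submodule.mem_bot]
  constructor
  · intro h; by_contra hp; rw [hg p hp] at h; omega
  · rintro rfl; simp

noncomputable abbrev Ypol (r : ℕ) : MvPolynomial (Fin 2) ℝ := (X 1) ^ (r + 1)
noncomputable abbrev Xpol (r : ℕ) : MvPolynomial (Fin 2) ℝ := (X 0) ^ (r + 1)

lemma hgY (r : ℕ) : ∀ p : MvPolynomial (Fin 2) ℝ, p ≠ 0 →
    (Ypol r * p).totalDegree = (r + 1) + p.totalDegree :=
  fun p hp => tdeg_X_pow_mul 1 (r + 1) p hp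

lemma hgX (r : ℕ) : ∀ p : MvPolynomial (Fin 2) ℝ, p ≠ 0 →
    (Xpol r * p).totalDegree = (r + 1) + p.totalDegree :=
  fun p hp => tdeg_X_pow_mul 0 (r + 1) p hp

lemma hgXY (r : ℕ) : ∀ p : MvPolynomial (Fin 2) ℝ, p ≠ 0 →
    ((Xpol r * Ypol r) * p).totalDegree = (2 * (r + 1)) + p.totalDegree := by
  intro p hp
  rw [mul_assoc, tdeg_X_pow_mul 0 (r+1) _ (mul_ne_zero (pow_ne_zero _ (X_ne_zero 1)) hp),
    tdeg_X_pow_mul 1 (r+1) p hp]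
  ring

noncomputable def phi (r d : ℕ) :
    (restrictTotalDegree (Fin 2) ℝ d × Qsub (Ypol r) d × Qsub (Xpol r) d
      × Qsub (Xpol r * Ypol r) d) →ₗ[ℝ] (Fin 4 → MvPolynomial (Fin 2) ℝ) where
  toFun v := ![(v.1 : MvPolynomial (Fin 2) ℝ), v.1 + Ypol r * v.2.1,
    v.1 + Ypol r * v.2.1 + Xpol r * v.2.2.1 - (Xpol r * Ypol r) * v.2.2.2,
    v.1 + Xpol r * v.2.2.1]
  map_add' v w := by
    funext i
    fin_cases i <;> simp <;> ring
  map_smul' c v := by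
    funext i
    fin_cases i <;> simp [smul_eq_C_mul] <;> ring


lemma phi_inj (r d : ℕ) : Function.Injective (phi r d) := by
  rw [← LinearMap.ker_eq_bot, LinearMap.ker_eq_bot']
  rintro ⟨f, a, b, t⟩ hv
  have h0 := congrFun hv 0
  have h1 := congrFun hv 1
  have h2 := congrFun hv 2
  have h3 := congrFun hv 3
  simp [phi] at h0 h1 h2 h3
  have hf : (f : MvPolynomial (Fin 2) ℝ) = 0 := by rw [h0]; rfl
  have ha : a = 0 := by rw [hf] at h1; simpa using h1
  have ha' : (a : MvPolynomial (Fin 2) ℝ) = 0 := by rw [ha]; rfl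
  have hb : b = 0 := by rw [hf] at h3; simpa using h3
  have hb' : (b : MvPolynomial (Fin 2) ℝ) = 0 := by rw [hb]; rfl
  have ht : t = 0 := by rw [hf, ha', hb'] at h2; simpa using h2
  exact Prod.ext h0 (Prod.ext ha (Prod.ext hb ht))

lemma mem_spline {l12 l23 l34 l41 : MvPolynomial (Fin 2) ℝ} {r d : ℕ}
    {f : Fin 4 → MvPolynomial (Fin 2) ℝ} :
    f ∈ splineSubmodule l12 l23 l34 l41 r d ↔ (l12 ^ (r + 1) ∣ f 0 - f 1 ∧ l23 ^ (r + 1) ∣ f 1 - f 2 ∧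
    l34 ^ (r + 1) ∣ f 2 - f 3 ∧ l41 ^ (r + 1) ∣ f 3 - f 0 ∧
    ∀ i, (f i).totalDegree ≤ d) := Iff.rfl

lemma spline_eq_range (r d : ℕ) :
    splineSubmodule (X 1) (X 0) (X 1) (X 0) r d = LinearMap.range (phi r d) := by
  ext f
  rw [mem_spline, LinearMap.mem_range]
  constructor
  · rintro ⟨h1, h2, h3, h4, h5⟩
    obtain ⟨a, ha⟩ : Ypol r ∣ f 1 - f 0 := (neg_sub (f 0) (f 1)) ▸ h1.neg_right
    obtain ⟨c, hc⟩ : Xpol r ∣ f 2 - f 1 := (neg_sub (f 1) (f 2)) ▸ h2.neg_right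
    obtain ⟨b, hb⟩ : Xpol r ∣ f 3 - f 0 := h4
    have hyd : Ypol r ∣ Xpol r * (b - c) := by
      have he : Xpol r * (b - c) = (f 3 - f 2) + (f 1 - f 0) := by
        rw [mul_sub, ← hb, ← hc]; ring
      rw [he]
      exact dvd_add ((neg_sub (f 2) (f 3)) ▸ h3.neg_right) ((neg_sub (f 0) (f 1)) ▸ h1.neg_right)
    obtain ⟨t, ht⟩ : Ypol r ∣ (b - c) :=
      Prime.pow_dvd_of_dvd_mul_left prime_X1 (r+1)
        (fun hdvd => not_X1_dvd_X0 (prime_X1.dvd_of_dvd_pow hdvd)) hyd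
    refine ⟨(⟨f 0, ?_⟩, ⟨a, ?_⟩, ⟨b, ?_⟩, ⟨t, ?_⟩), ?_⟩
    · exact (mem_restrictTotalDegree _ _ _).mpr (h5 0)
    · rw [mem_Qsub, ← ha]
      exact (tdeg_sub_le _ _).trans (max_le (h5 1) (h5 0))
    · rw [mem_Qsub, ← hb]
      exact (tdeg_sub_le _ _).trans (max_le (h5 3) (h5 0))
    · rw [mem_Qsub]
      have he : (Xpol r * Ypol r) * t = (f 3 - f 2) + (f 1 - f 0) := by
        rw [mul_assoc, ← ht, mul_sub, ← hb, ← hc]; ring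
      rw [he]
      exact (totalDegree_add _ _).trans
        (max_le ((tdeg_sub_le _ _).trans (max_le (h5 3) (h5 2)))
          ((tdeg_sub_le _ _).trans (max_le (h5 1) (h5 0))))
    · funext i
      fin_cases i
      · simp [phi]
      · simp [phi]; linear_combination -ha
      · simp [phi]; linear_combination -ha - hc + Xpol r * ht
      · simp [phi]; linear_combination -hb
  · rintro ⟨⟨⟨fv, hfv⟩, ⟨av, hav⟩, ⟨bv, hbv⟩, ⟨tv, htv⟩⟩, rfl⟩
    rw [mem_restrictTotalDegree] at hfv
    rw [mem_Qsub] at hav hbv htv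
    refine ⟨⟨-av, by simp [phi]; try ring⟩, ⟨Ypol r * tv - bv, by simp [phi]; try ring⟩,
      ⟨av - Xpol r * tv, by simp [phi]; try ring⟩, ⟨bv, by simp [phi]; try ring⟩, ?_⟩
    intro i
    fin_cases i <;> simp [phi]
    · exact hfv
    · exact (totalDegree_add _ _).trans (max_le hfv hav)
    · refine (tdeg_sub_le _ _).trans (max_le ((totalDegree_add _ _).trans
        (max_le ((totalDegree_add _ _).trans (max_le hfv hav)) hbv)) ?_)
      exact htv
    · exact (totalDegree_add _ _).trans (max_le hfv hbv)

/-- Dimension formula for the degree-bounded spline spaces `S^r_d(G)` on the 4-cycle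
with edge labels `y, x, y, x`: the dimension is `C(d+2,2)` for `d < r+1`, gains
`2·C(d-r+1,2)` for `r+1 ≤ d < 2(r+1)`, and additionally `C(d-2r,2)` for
`d ≥ 2(r+1)`. -/
theorem dim_spline_space_four_cycle (r d : ℕ) :
    (d < r + 1 →
      Module.finrank ℝ (splineSubmodule (X 1) (X 0) (X 1) (X 0) r d) =
        (d + 2).choose 2) ∧
    (r + 1 ≤ d → d < 2 * (r + 1) →
      Module.finrank ℝ (splineSubmodule (X 1) (X 0) (X 1) (X 0) r d) =
        (d + 2).choose 2 + 2 * (d - r + 1).choose 2) ∧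
    (2 * (r + 1) ≤ d →
      Module.finrank ℝ (splineSubmodule (X 1) (X 0) (X 1) (X 0) r d) =
        (d + 2).choose 2 + 2 * (d - r + 1).choose 2 + (d - 2 * r).choose 2) := by
  have e : (splineSubmodule (X 1) (X 0) (X 1) (X 0) r d) ≃ₗ[ℝ]
      (restrictTotalDegree (Fin 2) ℝ d × Qsub (Ypol r) d × Qsub (Xpol r) d
        × Qsub (Xpol r * Ypol r) d) :=
    (LinearEquiv.ofEq _ _ (spline_eq_range r d)).trans
      (LinearEquiv.ofInjective (phi r d) (phi_inj r d)).symm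
  have hfr := e.finrank_eq
  haveI : Module.Free ℝ (restrictTotalDegree (Fin 2) ℝ d) := Module.Free.of_divisionRing _ _
  haveI hfb : Module.Free ℝ (⊥ : Submodule ℝ (MvPolynomial (Fin 2) ℝ)) := Module.Free.of_divisionRing _ _
  haveI : ∀ m : ℕ, Module.Free ℝ (restrictTotalDegree (Fin 2) ℝ m) := fun m => Module.Free.of_divisionRing _ _
  refine ⟨fun hc1 => ?_, fun hc2 hc2' => ?_, fun hc3 => ?_⟩
  · rw [hfr, Qsub_eq_bot (hgY r) (by omega), Qsub_eq_bot (hgX r) (by omega),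
      Qsub_eq_bot (hgXY r) (by omega), Module.finrank_prod, Module.finrank_prod,
      Module.finrank_prod]
    simp only [finrank_rtd, finrank_bot]
    simp
  · rw [hfr, Qsub_eq (hgY r) (by omega), Qsub_eq (hgX r) (by omega),
      Qsub_eq_bot (hgXY r) (by omega), Module.finrank_prod, Module.finrank_prod,
      Module.finrank_prod]
    simp only [finrank_rtd, finrank_bot]
    have h : d - (r + 1) + 2 = d - r + 1 := by omega
    rw [h]; ring
  · rw [hfr, Qsub_eq (hgY r) (by omega), Qsub_eq (hgX r) (by omega),
      Qsub_eq (hgXY r) (by omega), Module.finrank_prod, Module.finrank_prod,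
      Module.finrank_prod]
    simp only [finrank_rtd, finrank_bot]
    have h : d - (r + 1) + 2 = d - r + 1 := by omega
    have h2 : d - 2 * (r + 1) + 2 = d - 2 * r := by omega
    rw [h, h2]; ring
end

section
/- The five quadruples (1,1,1,1), (x,x,x,x), (y,y,y,y), (x,x,0,0), (0,y,y,0) form an ℝ-basis of S⁰₁(G); in particular dim_ℝ S⁰₁(G) = 5. -/
open MvPolynomial

private lemma classify2 (m : Fin 2 →₀ ℕ) (h : m 0 + m 1 ≤ 1) :
    m = 0 ∨ m = Finsupp.single 0 1 ∨ m = Finsupp.single 1 1 := by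
  have h0 : m 0 = 0 ∨ m 0 = 1 := by omega
  have h1 : m 1 = 0 ∨ m 1 = 1 := by omega
  rcases h0 with h0 | h0 <;> rcases h1 with h1 | h1
  · left; ext i; fin_cases i <;> simp [h0, h1]
  · right; right; ext i; fin_cases i <;> simp [h0, h1, Finsupp.single_apply]
  · right; left; ext i; fin_cases i <;> simp [h0, h1, Finsupp.single_apply]
  · omega

private lemma sum_eq2 (m : Fin 2 →₀ ℕ) : (m.sum fun _ e => e) = m 0 + m 1 := by
  rw [Finsupp.sum_fintype _ _ (fun _ => rfl), Fin.sum_univ_two]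

private lemma repr1 (f : MvPolynomial (Fin 2) ℝ) (hf : f.totalDegree ≤ 1) :
    f = C (coeff 0 f) + C (coeff (Finsupp.single 0 1) f) * X 0
        + C (coeff (Finsupp.single 1 1) f) * X 1 := by
  ext m
  by_cases hm : m ∈ f.support
  · have := le_trans (le_totalDegree hm) hf
    rw [sum_eq2] at this
    rcases classify2 m this with h | h | h <;> subst h <;>
      simp [coeff_C, coeff_C_mul, coeff_X', Finsupp.single_eq_single_iff, eq_comm,
        Finsupp.single_eq_zero]
  · have hz : coeff m f = 0 := by simpa using hm
    rw [hz]
    have h0 : ¬ (m 0 + m 1 ≤ 1) ∨ m = 0 ∨ m = Finsupp.single 0 1 ∨ m = Finsupp.single 1 1 := by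
      by_cases h : m 0 + m 1 ≤ 1
      · exact Or.inr (classify2 m h)
      · exact Or.inl h
    rcases h0 with h | h | h | h
    · have hne0 : m ≠ 0 := by rintro rfl; simp at h
      have hne1 : Finsupp.single (0:Fin 2) 1 ≠ m := by rintro rfl; simp [Finsupp.single_apply] at h
      have hne2 : Finsupp.single (1:Fin 2) 1 ≠ m := by rintro rfl; simp [Finsupp.single_apply] at h
      simp [coeff_C, coeff_C_mul, coeff_X', hne0, hne1, hne2, Ne.symm hne0]
    all_goals (subst h; simp [coeff_C, coeff_C_mul, coeff_X', hz, Finsupp.single_eq_single_iff,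
      eq_comm, Finsupp.single_eq_zero])

private lemma dvd_coeff_zero' {i : Fin 2} {g : MvPolynomial (Fin 2) ℝ} (h : X i ∣ g)
    {m : Fin 2 →₀ ℕ} (hm : m i = 0) : coeff m g = 0 := by
  obtain ⟨p, rfl⟩ := h
  rw [coeff_X_mul']
  simp [hm]

/-- The five quadruples `(1,1,1,1)`, `(x,x,x,x)`, `(y,y,y,y)`, `(x,x,0,0)`,
`(0,y,y,0)` form an `ℝ`-basis of `S⁰₁(G)` for the 4-cycle with edge labels
`y, x, y, x`; in particular `dim_ℝ S⁰₁(G) = 5`. -/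
theorem basis_of_S01_four_cycle :
    let v : Fin 5 → (Fin 4 → MvPolynomial (Fin 2) ℝ) :=
      ![![1, 1, 1, 1],
        ![X 0, X 0, X 0, X 0],
        ![X 1, X 1, X 1, X 1],
        ![X 0, X 0, 0, 0],
        ![0, X 1, X 1, 0]]
    LinearIndependent ℝ v ∧
    Submodule.span ℝ (Set.range v) = splineSubmodule (X 1) (X 0) (X 1) (X 0) 0 1 ∧
    Module.finrank ℝ (splineSubmodule (X 1) (X 0) (X 1) (X 0) 0 1) = 5 := by
  intro v
  have hmem : ∀ f, f ∈ splineSubmodule (X 1) (X 0) (X 1) (X 0) 0 1 ↔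
      ((X 1 : MvPolynomial (Fin 2) ℝ) ^ 1 ∣ f 0 - f 1 ∧
       (X 0 : MvPolynomial (Fin 2) ℝ) ^ 1 ∣ f 1 - f 2 ∧
       (X 1 : MvPolynomial (Fin 2) ℝ) ^ 1 ∣ f 2 - f 3 ∧
       (X 0 : MvPolynomial (Fin 2) ℝ) ^ 1 ∣ f 3 - f 0 ∧
       ∀ i, (f i).totalDegree ≤ 1) := fun f => Iff.rfl
  have hLI : LinearIndependent ℝ v := by
    rw [Fintype.linearIndependent_iff]
    intro g hg
    have e0 : g 0 = 0 := by
      have := congrArg (coeff 0) (congrFun hg 3)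
      simpa [v, Fin.sum_univ_five, Finset.sum_apply, Pi.smul_apply, Matrix.vecHead,
        Matrix.vecTail, coeff_smul, coeff_X', coeff_one, eq_comm,
        Finsupp.single_eq_zero] using this
    have e1 : g 1 = 0 := by
      have := congrArg (coeff (Finsupp.single 0 1)) (congrFun hg 3)
      simpa [v, Fin.sum_univ_five, Finset.sum_apply, Pi.smul_apply, Matrix.vecHead,
        Matrix.vecTail, coeff_smul, coeff_X', coeff_one, eq_comm, Finsupp.single_eq_single_iff,
        Finsupp.single_eq_zero] using this
    have e2 : g 2 = 0 := by
      have := congrArg (coeff (Finsupp.single 1 1)) (congrFun hg 3)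
      simpa [v, Fin.sum_univ_five, Finset.sum_apply, Pi.smul_apply, Matrix.vecHead,
        Matrix.vecTail, coeff_smul, coeff_X', coeff_one, eq_comm, Finsupp.single_eq_single_iff,
        Finsupp.single_eq_zero] using this
    have e3 : g 3 = 0 := by
      have := congrArg (coeff (Finsupp.single 0 1)) (congrFun hg 0)
      simpa [v, Fin.sum_univ_five, Finset.sum_apply, Pi.smul_apply, Matrix.vecHead,
        Matrix.vecTail, coeff_smul, coeff_X', coeff_one, eq_comm, Finsupp.single_eq_single_iff,
        Finsupp.single_eq_zero, e0, e1, e2] using this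
    have e4 : g 4 = 0 := by
      have := congrArg (coeff (Finsupp.single 1 1)) (congrFun hg 2)
      simpa [v, Fin.sum_univ_five, Finset.sum_apply, Pi.smul_apply, Matrix.vecHead,
        Matrix.vecTail, coeff_smul, coeff_X', coeff_one, eq_comm, Finsupp.single_eq_single_iff,
        Finsupp.single_eq_zero, e0, e1, e2, e3] using this
    intro i
    fin_cases i <;> assumption
  have hspan : Submodule.span ℝ (Set.range v) = splineSubmodule (X 1) (X 0) (X 1) (X 0) 0 1 := by
    apply le_antisymm
    · rw [Submodule.span_le]
      rintro _ ⟨i, rfl⟩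
      rw [SetLike.mem_coe, hmem]
      fin_cases i
      · exact ⟨⟨0, by simp [v, Matrix.vecHead, Matrix.vecTail]⟩, ⟨0, by simp [v, Matrix.vecHead, Matrix.vecTail]⟩, ⟨0, by simp [v, Matrix.vecHead, Matrix.vecTail]⟩, ⟨0, by simp [v, Matrix.vecHead, Matrix.vecTail]⟩,
          fun j => by fin_cases j <;> simp [v, Matrix.vecHead, Matrix.vecTail]⟩
      · exact ⟨⟨0, by simp [v, Matrix.vecHead, Matrix.vecTail]⟩, ⟨0, by simp [v, Matrix.vecHead, Matrix.vecTail]⟩, ⟨0, by simp [v, Matrix.vecHead, Matrix.vecTail]⟩, ⟨0, by simp [v, Matrix.vecHead, Matrix.vecTail]⟩,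
          fun j => by fin_cases j <;> simp [v, Matrix.vecHead, Matrix.vecTail]⟩
      · exact ⟨⟨0, by simp [v, Matrix.vecHead, Matrix.vecTail]⟩, ⟨0, by simp [v, Matrix.vecHead, Matrix.vecTail]⟩, ⟨0, by simp [v, Matrix.vecHead, Matrix.vecTail]⟩, ⟨0, by simp [v, Matrix.vecHead, Matrix.vecTail]⟩,
          fun j => by fin_cases j <;> simp [v, Matrix.vecHead, Matrix.vecTail]⟩
      · exact ⟨⟨0, by simp [v, Matrix.vecHead, Matrix.vecTail]⟩, ⟨1, by simp [v, Matrix.vecHead, Matrix.vecTail]⟩, ⟨0, by simp [v, Matrix.vecHead, Matrix.vecTail]⟩, ⟨-1, by simp [v, Matrix.vecHead, Matrix.vecTail]⟩,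
          fun j => by fin_cases j <;> simp [v, Matrix.vecHead, Matrix.vecTail]⟩
      · exact ⟨⟨-1, by simp [v, Matrix.vecHead, Matrix.vecTail]⟩, ⟨0, by simp [v, Matrix.vecHead, Matrix.vecTail]⟩, ⟨1, by simp [v, Matrix.vecHead, Matrix.vecTail]⟩, ⟨0, by simp [v, Matrix.vecHead, Matrix.vecTail]⟩,
          fun j => by fin_cases j <;> simp [v, Matrix.vecHead, Matrix.vecTail]⟩
    · intro f hf
      rw [hmem] at hf
      obtain ⟨h1, h2, h3, h4, h5⟩ := hf
      rw [pow_one] at h1 h2 h3 h4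
      have ea01 : coeff 0 (f 0) = coeff 0 (f 1) := by
        have := dvd_coeff_zero' h1 (m := 0) rfl
        rwa [coeff_sub, sub_eq_zero] at this
      have eb01 : coeff (Finsupp.single 0 1) (f 0) = coeff (Finsupp.single 0 1) (f 1) := by
        have := dvd_coeff_zero' h1 (m := Finsupp.single 0 1) (by simp)
        rwa [coeff_sub, sub_eq_zero] at this
      have ea12 : coeff 0 (f 1) = coeff 0 (f 2) := by
        have := dvd_coeff_zero' h2 (m := 0) rfl
        rwa [coeff_sub, sub_eq_zero] at this
      have ec12 : coeff (Finsupp.single 1 1) (f 1) = coeff (Finsupp.single 1 1) (f 2) := by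
        have := dvd_coeff_zero' h2 (m := Finsupp.single 1 1) (by simp)
        rwa [coeff_sub, sub_eq_zero] at this
      have ea23 : coeff 0 (f 2) = coeff 0 (f 3) := by
        have := dvd_coeff_zero' h3 (m := 0) rfl
        rwa [coeff_sub, sub_eq_zero] at this
      have eb23 : coeff (Finsupp.single 0 1) (f 2) = coeff (Finsupp.single 0 1) (f 3) := by
        have := dvd_coeff_zero' h3 (m := Finsupp.single 0 1) (by simp)
        rwa [coeff_sub, sub_eq_zero] at this
      have ec30 : coeff (Finsupp.single 1 1) (f 3) = coeff (Finsupp.single 1 1) (f 0) := by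
        have := dvd_coeff_zero' h4 (m := Finsupp.single 1 1) (by simp)
        rwa [coeff_sub, sub_eq_zero] at this
      have key : f = (coeff 0 (f 0)) • v 0 + (coeff (Finsupp.single 0 1) (f 2)) • v 1
          + (coeff (Finsupp.single 1 1) (f 0)) • v 2
          + (coeff (Finsupp.single 0 1) (f 0) - coeff (Finsupp.single 0 1) (f 2)) • v 3
          + (coeff (Finsupp.single 1 1) (f 1) - coeff (Finsupp.single 1 1) (f 0)) • v 4 := by
        funext i
        fin_cases i
        · show f 0 = (coeff 0 (f 0)) • (1 : MvPolynomial (Fin 2) ℝ)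
            + (coeff (Finsupp.single 0 1) (f 2)) • X 0
            + (coeff (Finsupp.single 1 1) (f 0)) • X 1
            + (coeff (Finsupp.single 0 1) (f 0) - coeff (Finsupp.single 0 1) (f 2)) • X 0
            + (coeff (Finsupp.single 1 1) (f 1) - coeff (Finsupp.single 1 1) (f 0)) • 0
          conv_lhs => rw [repr1 (f 0) (h5 0)]
          simp only [smul_eq_C_mul, map_sub]
          ring
        · show f 1 = (coeff 0 (f 0)) • (1 : MvPolynomial (Fin 2) ℝ)
            + (coeff (Finsupp.single 0 1) (f 2)) • X 0
            + (coeff (Finsupp.single 1 1) (f 0)) • X 1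
            + (coeff (Finsupp.single 0 1) (f 0) - coeff (Finsupp.single 0 1) (f 2)) • X 0
            + (coeff (Finsupp.single 1 1) (f 1) - coeff (Finsupp.single 1 1) (f 0)) • X 1
          conv_lhs => rw [repr1 (f 1) (h5 1)]
          rw [← ea01, ← eb01]
          simp only [smul_eq_C_mul, map_sub]
          ring
        · show f 2 = (coeff 0 (f 0)) • (1 : MvPolynomial (Fin 2) ℝ)
            + (coeff (Finsupp.single 0 1) (f 2)) • X 0
            + (coeff (Finsupp.single 1 1) (f 0)) • X 1
            + (coeff (Finsupp.single 0 1) (f 0) - coeff (Finsupp.single 0 1) (f 2)) • 0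
            + (coeff (Finsupp.single 1 1) (f 1) - coeff (Finsupp.single 1 1) (f 0)) • X 1
          conv_lhs => rw [repr1 (f 2) (h5 2)]
          rw [← ea12, ← ea01, ← ec12]
          simp only [smul_eq_C_mul, map_sub]
          ring
        · show f 3 = (coeff 0 (f 0)) • (1 : MvPolynomial (Fin 2) ℝ)
            + (coeff (Finsupp.single 0 1) (f 2)) • X 0
            + (coeff (Finsupp.single 1 1) (f 0)) • X 1
            + (coeff (Finsupp.single 0 1) (f 0) - coeff (Finsupp.single 0 1) (f 2)) • 0
            + (coeff (Finsupp.single 1 1) (f 1) - coeff (Finsupp.single 1 1) (f 0)) • 0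
          conv_lhs => rw [repr1 (f 3) (h5 3)]
          rw [← ea23, ← ea12, ← ea01, ← eb23, ec30]
          simp only [smul_eq_C_mul, map_sub]
          ring
      rw [key]
      refine Submodule.add_mem _ (Submodule.add_mem _ (Submodule.add_mem _ (Submodule.add_mem _
        (Submodule.smul_mem _ _ (Submodule.subset_span ⟨0, rfl⟩))
        (Submodule.smul_mem _ _ (Submodule.subset_span ⟨1, rfl⟩)))
        (Submodule.smul_mem _ _ (Submodule.subset_span ⟨2, rfl⟩)))
        (Submodule.smul_mem _ _ (Submodule.subset_span ⟨3, rfl⟩)))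
        (Submodule.smul_mem _ _ (Submodule.subset_span ⟨4, rfl⟩))
  refine ⟨hLI, hspan, ?_⟩
  rw [← hspan]
  simpa using finrank_span_eq_card hLI
end

section
/- The four splines g⁽¹⁾ = (1,1,1,1), g⁽²⁾ = (0, y², y², 0), g⁽³ᵃ⁾ = (0, 0, x(y−3x)², x²(9x−6y)), g⁽³ᵇ⁾ = (0, 0, y(y−3x)², 9x²y) all belong to S¹(G), and they generate S¹(G) as an ℝ[x,y]-module. -/
open MvPolynomial

lemma prime_X_fin2 (i : Fin 2) : Prime (X i : MvPolynomial (Fin 2) ℝ) := by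
  let e : MvPolynomial (Fin 2) ℝ ≃ₐ[ℝ] Polynomial (MvPolynomial (Fin 1) ℝ) :=
    (renameEquiv ℝ (Equiv.swap i 0)).trans (finSuccEquiv ℝ 1)
  rw [← MulEquiv.prime_iff e.toMulEquiv]
  have h : e (X i) = Polynomial.X := by
    simp [e, finSuccEquiv_X_zero]
  rw [show e.toMulEquiv (X i) = e (X i) from rfl, h]
  exact Polynomial.prime_X

/-- For the 4-cycle with edge labels `ℓ(v₁v₂) = y`, `ℓ(v₂v₃) = y - 3x`,
`ℓ(v₃v₄) = y`, `ℓ(v₄v₁) = x` and smoothness `r = 1`, the four splines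
`g⁽¹⁾ = (1,1,1,1)`, `g⁽²⁾ = (0, y², y², 0)`,
`g⁽³ᵃ⁾ = (0, 0, x(y−3x)², x²(9x−6y))`, `g⁽³ᵇ⁾ = (0, 0, y(y−3x)², 9x²y)` all lie in
`S¹(G)` and generate it as an `ℝ[x,y]`-module. -/
theorem generators_of_S1_four_cycle :
    let x : MvPolynomial (Fin 2) ℝ := X 0
    let y : MvPolynomial (Fin 2) ℝ := X 1
    let S : Set (Fin 4 → MvPolynomial (Fin 2) ℝ) :=
      {f | y ^ 2 ∣ f 0 - f 1 ∧ (y - 3 * x) ^ 2 ∣ f 1 - f 2 ∧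
           y ^ 2 ∣ f 2 - f 3 ∧ x ^ 2 ∣ f 3 - f 0}
    let g1 : Fin 4 → MvPolynomial (Fin 2) ℝ := ![1, 1, 1, 1]
    let g2 : Fin 4 → MvPolynomial (Fin 2) ℝ := ![0, y ^ 2, y ^ 2, 0]
    let g3a : Fin 4 → MvPolynomial (Fin 2) ℝ :=
      ![0, 0, x * (y - 3 * x) ^ 2, x ^ 2 * (9 * x - 6 * y)]
    let g3b : Fin 4 → MvPolynomial (Fin 2) ℝ :=
      ![0, 0, y * (y - 3 * x) ^ 2, 9 * x ^ 2 * y]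
    g1 ∈ S ∧ g2 ∈ S ∧ g3a ∈ S ∧ g3b ∈ S ∧
    ∀ f ∈ S, ∃ h1 h2 h3 h4 : MvPolynomial (Fin 2) ℝ,
      f = h1 • g1 + h2 • g2 + h3 • g3a + h4 • g3b := by
  intro x y S g1 g2 g3a g3b
  have hx0 : x ≠ 0 := X_ne_zero _
  have hy0 : y ≠ 0 := X_ne_zero _
  have hpx : Prime x := prime_X_fin2 0
  have hpy : Prime y := prime_X_fin2 1
  have hyx : ¬ y ∣ x := by
    simp only [x, y, X_dvd_X]
    exact one_ne_zero
  have hxy : ¬ x ∣ y := by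
    simp only [x, y, X_dvd_X]
    exact zero_ne_one
  refine ⟨⟨⟨0, by show (1 : MvPolynomial (Fin 2) ℝ) - 1 = y ^ 2 * 0; ring⟩,
      ⟨0, by show (1 : MvPolynomial (Fin 2) ℝ) - 1 = (y - 3 * x) ^ 2 * 0; ring⟩,
      ⟨0, by show (1 : MvPolynomial (Fin 2) ℝ) - 1 = y ^ 2 * 0; ring⟩,
      ⟨0, by show (1 : MvPolynomial (Fin 2) ℝ) - 1 = x ^ 2 * 0; ring⟩⟩,
    ⟨⟨-1, by show 0 - y ^ 2 = y ^ 2 * (-1); ring⟩,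
      ⟨0, by show y ^ 2 - y ^ 2 = (y - 3 * x) ^ 2 * 0; ring⟩,
      ⟨1, by show y ^ 2 - 0 = y ^ 2 * 1; ring⟩,
      ⟨0, by show (0 : MvPolynomial (Fin 2) ℝ) - 0 = x ^ 2 * 0; ring⟩⟩,
    ⟨⟨0, by show (0 : MvPolynomial (Fin 2) ℝ) - 0 = y ^ 2 * 0; ring⟩,
      ⟨-x, by show 0 - x * (y - 3 * x) ^ 2 = (y - 3 * x) ^ 2 * (-x); ring⟩,
      ⟨x, by show x * (y - 3 * x) ^ 2 - x ^ 2 * (9 * x - 6 * y) = y ^ 2 * x; ring⟩,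
      ⟨9 * x - 6 * y, by
        show x ^ 2 * (9 * x - 6 * y) - 0 = x ^ 2 * (9 * x - 6 * y); ring⟩⟩,
    ⟨⟨0, by show (0 : MvPolynomial (Fin 2) ℝ) - 0 = y ^ 2 * 0; ring⟩,
      ⟨-y, by show 0 - y * (y - 3 * x) ^ 2 = (y - 3 * x) ^ 2 * (-y); ring⟩,
      ⟨y - 6 * x, by
        show y * (y - 3 * x) ^ 2 - 9 * x ^ 2 * y = y ^ 2 * (y - 6 * x); ring⟩,
      ⟨9 * y, by show 9 * x ^ 2 * y - 0 = x ^ 2 * (9 * y); ring⟩⟩, ?_⟩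
  rintro f ⟨⟨a, ha⟩, ⟨b, hb⟩, ⟨c', hc⟩, ⟨d, hd⟩⟩
  have key : y ∣ x ^ 2 * (9 * (-b) - d) :=
    ⟨y * (a + c' + b) + 6 * x * (-b), by linear_combination hb + hd + ha + hc⟩
  obtain ⟨e, he⟩ := (hpy.dvd_or_dvd key).resolve_left (fun h => hyx (hpy.dvd_of_dvd_pow h))
  have hx2e : x ^ 2 * e = y * (a + c' + b) - 6 * x * b := by
    have h1 : y * (x ^ 2 * e) = y * (y * (a + c' + b) - 6 * x * b) := by
      linear_combination -x ^ 2 * he + hb + hd + ha + hc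
    exact mul_left_cancel₀ hy0 h1
  have hxd : x ∣ y * (a + c' + b) := ⟨x * e + 6 * b, by linear_combination -hx2e⟩
  obtain ⟨m, hm⟩ := (hpx.dvd_or_dvd hxd).resolve_left hxy
  have h3 : x * e = y * m - 6 * b := by
    have h1 : x * (x * e) = x * (y * m - 6 * b) := by
      linear_combination hx2e + y * hm
    exact mul_left_cancel₀ hx0 h1
  have hC : (C (6⁻¹ : ℝ) : MvPolynomial (Fin 2) ℝ) * 6 = 1 := by
    rw [show (6 : MvPolynomial (Fin 2) ℝ) = C 6 from (map_ofNat C 6).symm, ← C_mul]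
    norm_num
  refine ⟨f 0, -a, C (6⁻¹ : ℝ) * e, C (6⁻¹ : ℝ) * (-m), ?_⟩
  funext i
  fin_cases i
  · show f 0 = f 0 * 1 + -a * 0 + C (6⁻¹ : ℝ) * e * 0 + C (6⁻¹ : ℝ) * (-m) * 0
    ring
  · show f 1 = f 0 * 1 + -a * y ^ 2 + C (6⁻¹ : ℝ) * e * 0 + C (6⁻¹ : ℝ) * (-m) * 0
    linear_combination -ha
  · show f 2 = f 0 * 1 + -a * y ^ 2 + C (6⁻¹ : ℝ) * e * (x * (y - 3 * x) ^ 2) +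
      C (6⁻¹ : ℝ) * (-m) * (y * (y - 3 * x) ^ 2)
    linear_combination -ha - hb + (-(C (6⁻¹ : ℝ)) * (y - 3 * x) ^ 2) * h3 +
      ((y - 3 * x) ^ 2 * b) * hC
  · show f 3 = f 0 * 1 + -a * 0 + C (6⁻¹ : ℝ) * e * (x ^ 2 * (9 * x - 6 * y)) +
      C (6⁻¹ : ℝ) * (-m) * (9 * x ^ 2 * y)
    linear_combination hd - x ^ 2 * he + (-9 * C (6⁻¹ : ℝ) * x ^ 2) * h3 +
      (x ^ 2 * y * e + 9 * x ^ 2 * b) * hC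
end
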